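/- Let z ∈ ℝ with z > 1 and let W ∈ (0, 2π). There exists a constant M > 0 (depending only on z and W) such that for every real a > 1 and every w ∈ ℂ with Re w > −W and |Im w| < W, one has |f(z,w,a)| ≤ M a ( e^{Re w} + z^{1−a} e^{(a−1) Re w} ). -/

import Mathlib

open scoped BigOperators

/-- `f(z,w,a) = (1 - (z e^{-w})^{1-a})/(1 - z e^{-w})`, with the removable singularity
(where `z e^{-w} = 1`) filled by the limiting value `1 - a`.  Principal powers. -/
noncomputable def lerchF (z a w : ℂ) : ℂ :=
  if z * Complex.exp (-w) = 1 then 1 - a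
  else (1 - (z * Complex.exp (-w)) ^ ((1 : ℂ) - a)) / (1 - z * Complex.exp (-w))

/-!
Put `u = z e^{-w}` and `s = 1 - a`, so that `f = (1 - u^s)/(1 - u)` and
`‖u^s‖ = z^{1-a} e^{(a-1) Re w}`. Away from `u = 1` the denominator is bounded below and
`‖f‖ ≤ 2 (1 + ‖u^s‖)`. Near `u = 1`, writing `u^s = exp (s log u)`, the mean value inequality
gives `‖1 - u^s‖ ≤ ‖s‖ ‖log u‖ max(1, ‖u^s‖)`, and `‖log u‖ ≤ (3/2) ‖1 - u‖` cancels the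
denominator. Finally `Re w > -W` gives `1 ≤ e^W e^{Re w}`, which absorbs the constant term.
-/

open Complex Set

lemma norm_exp_ofReal_mul_le_max (c : ℂ) {t : ℝ} (ht : t ∈ Icc (0 : ℝ) 1) :
    ‖exp (t * c)‖ ≤ max 1 ‖exp c‖ := by
  have hre : t * c.re ≤ max 0 c.re := by
    rcases le_total c.re 0 with h | h
    · exact (mul_nonpos_of_nonneg_of_nonpos ht.1 h).trans (le_max_left _ _)
    · exact (mul_le_of_le_one_left h ht.2).trans (le_max_right _ _)
  rw [norm_exp, norm_exp, ← Real.exp_zero, ← Real.exp_monotone.map_max]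
  simpa using hre

lemma norm_exp_sub_one_le_mul_max (c : ℂ) : ‖exp c - 1‖ ≤ ‖c‖ * max 1 ‖exp c‖ := by
  have hderiv (t : ℝ) :
      HasDerivWithinAt (fun t : ℝ => exp (t * c)) (exp (t * c) * c) (Icc 0 1) t := by
    have := ((hasDerivAt_id (t : ℂ)).mul_const c).cexp
    exact (by simpa using this.comp_ofReal : HasDerivAt _ _ t).hasDerivWithinAt
  have := norm_image_sub_le_of_norm_deriv_le_segment_01' (fun t _ => hderiv t)
    (C := ‖c‖ * max 1 ‖exp c‖) fun t ht => by
      rw [norm_mul, mul_comm]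
      exact mul_le_mul_of_nonneg_left
        (norm_exp_ofReal_mul_le_max c (Ico_subset_Icc_self ht)) (norm_nonneg c)
  simpa using this

lemma norm_one_sub_cpow_le {u : ℂ} (hu : u ≠ 0) (s : ℂ) :
    ‖1 - u ^ s‖ ≤ ‖log u‖ * ‖s‖ * max 1 ‖u ^ s‖ := by
  rw [norm_sub_rev, cpow_def_of_ne_zero hu, ← norm_mul]
  exact norm_exp_sub_one_le_mul_max _

lemma norm_one_sub_cpow_div_le {u : ℂ} (hu : u ≠ 0) (hu1 : u ≠ 1) (s : ℂ) :
    ‖(1 - u ^ s) / (1 - u)‖ ≤ 2 * (1 + ‖s‖) * (1 + ‖u ^ s‖) := by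
  have hd : 0 < ‖1 - u‖ := norm_pos_iff.mpr (sub_ne_zero.mpr hu1.symm)
  have hmax : max 1 ‖u ^ s‖ ≤ 1 + ‖u ^ s‖ := max_le (by simp) (by simp)
  rw [norm_div, div_le_iff₀ hd]
  rcases le_or_gt (1 / 2 : ℝ) ‖1 - u‖ with hfar | hnear
  · calc ‖1 - u ^ s‖ ≤ 1 + ‖u ^ s‖ := by simpa using norm_sub_le (1 : ℂ) (u ^ s)
      _ ≤ 2 * (1 + ‖s‖) * (1 + ‖u ^ s‖) * ‖1 - u‖ := by
        have : 1 ≤ 2 * (1 + ‖s‖) * ‖1 - u‖ := by nlinarith [norm_nonneg s]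
        nlinarith [norm_nonneg (u ^ s)]
  · have hlog : ‖log u‖ ≤ 3 / 2 * ‖1 - u‖ := by
      have h := norm_log_one_add_half_le_self (z := u - 1) (by rw [norm_sub_rev]; exact hnear.le)
      rwa [add_sub_cancel, norm_sub_rev] at h
    calc ‖1 - u ^ s‖ ≤ ‖log u‖ * ‖s‖ * max 1 ‖u ^ s‖ := norm_one_sub_cpow_le hu s
      _ ≤ (3 / 2 * ‖1 - u‖) * (1 + ‖s‖) * (1 + ‖u ^ s‖) := by gcongr; simp
      _ ≤ 2 * (1 + ‖s‖) * (1 + ‖u ^ s‖) * ‖1 - u‖ := by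
        have : 0 ≤ (1 + ‖s‖) * (1 + ‖u ^ s‖) * ‖1 - u‖ := by positivity
        nlinarith

lemma norm_lerchF_le {z : ℂ} (hz : z ≠ 0) (a w : ℂ) :
    ‖lerchF z a w‖ ≤ 2 * (1 + ‖1 - a‖) * (1 + ‖(z * exp (-w)) ^ (1 - a)‖) := by
  unfold lerchF
  split_ifs with h
  · nlinarith [norm_nonneg (1 - a), norm_nonneg ((z * exp (-w)) ^ (1 - a))]
  · exact norm_one_sub_cpow_div_le (mul_ne_zero hz (exp_ne_zero _)) h _

lemma norm_ofReal_mul_exp_neg_cpow {z : ℝ} (hz : 0 < z) (b : ℝ) (w : ℂ) :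
    ‖((z : ℂ) * exp (-w)) ^ (b : ℂ)‖ = z ^ b * Real.exp (-b * w.re) := by
  rw [norm_cpow_real, norm_mul, norm_exp, norm_real, Real.norm_of_nonneg hz.le,
    Real.mul_rpow hz.le (Real.exp_pos _).le, ← Real.exp_mul, neg_re]
  ring_nf

theorem stmt14_general (z : ℝ) (hz : 1 < z) (W : ℝ) (hW0 : 0 < W) :
    ∃ M : ℝ, 0 < M ∧
      ∀ a : ℝ, 1 < a → ∀ w : ℂ, -W < w.re → |w.im| < W →
        ‖lerchF (z : ℂ) (a : ℂ) w‖
          ≤ M * a * (Real.exp w.re + z ^ (1 - a) * Real.exp ((a - 1) * w.re)) := by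
  refine ⟨2 * Real.exp W, by positivity, fun a ha w hre _ => ?_⟩
  have hz0 : (0 : ℝ) < z := one_pos.trans hz
  set T := z ^ (1 - a) * Real.exp ((a - 1) * w.re)
  have hT : ‖((z : ℂ) * exp (-w)) ^ (1 - (a : ℂ))‖ = T := by
    rw [← ofReal_one, ← ofReal_sub, norm_ofReal_mul_exp_neg_cpow hz0, neg_sub]
  have hs : 1 + ‖1 - (a : ℂ)‖ = a := by
    rw [← ofReal_one, ← ofReal_sub, norm_real, Real.norm_of_nonpos (by linarith)]
    ring
  have hone : 1 ≤ Real.exp W * Real.exp w.re := by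
    rw [← Real.exp_add]; exact Real.one_le_exp (by linarith)
  have hTW : T ≤ Real.exp W * T :=
    le_mul_of_one_le_left (by positivity) (Real.one_le_exp hW0.le)
  calc ‖lerchF z a w‖ ≤ 2 * a * (1 + T) := by
        simpa only [hs, hT] using norm_lerchF_le (ofReal_ne_zero.mpr hz0.ne') a w
    _ ≤ 2 * Real.exp W * a * (Real.exp w.re + T) := by
        have : 0 ≤ 2 * a := by linarith
        nlinarith

theorem stmt14 (z : ℝ) (hz : 1 < z) (W : ℝ) (hW0 : 0 < W) (hW : W < 2 * Real.pi) :
    ∃ M : ℝ, 0 < M ∧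
      ∀ a : ℝ, 1 < a → ∀ w : ℂ, -W < w.re → |w.im| < W →
        ‖lerchF (z : ℂ) (a : ℂ) w‖
          ≤ M * a * (Real.exp w.re + z ^ (1 - a) * Real.exp ((a - 1) * w.re)) :=
  stmt14_general z hz W hW0
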